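/- Let a > 0 and let f : ℝ → ℂ be locally integrable and a-periodic, i.e. f(t + a) = f(t) for almost every t ∈ ℝ. Then for every Schwartz function g : ℝ → ℂ one has ∫_ℝ f(t) ĝ(t) dt = (1/a) · ∑_{n∈ℤ} F(n) g(n/a), where F(n) = ∫_0^a f(t) e^{−2πint/a} dt are the Fourier coefficients of f, and the series on the right converges absolutely. (Equivalently: the distributional Fourier transform of f is the weighted Dirac comb (1/a)∑_{n∈ℤ} F(n) δ_{n/a}.) -/

import Mathlib

open scoped FourierTransform
open MeasureTheory

/-- The `n`-th classical Fourier coefficient of an `a`-periodic function: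
`F n = ∫_0^a f t e^{-2πint/a} dt`. -/
noncomputable def fourierCoeffPeriodic (a : ℝ) (f : ℝ → ℂ) (n : ℤ) : ℂ :=
  ∫ t in (0:ℝ)..a, f t * Complex.exp (-2 * (Real.pi : ℂ) * Complex.I * (n : ℂ) * (t : ℂ) / (a : ℂ))

open Set Filter Asymptotics TopologicalSpace in
/-- Summability of sup-norms of translates of a Schwartz function on `[0,1]`. -/
lemma aux_summable_B (H : SchwartzMap ℝ ℂ) :
    Summable fun k : ℤ => ‖(((⟨⇑H, H.continuous⟩ : C(ℝ, ℂ)).comp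
      (ContinuousMap.addRight (k:ℝ))).restrict (Set.Icc (0:ℝ) 1))‖ := by
  refine summable_of_isBigO (Real.summable_abs_int_rpow one_lt_two) ?_
  have h1 : ⇑(⟨⇑H, H.continuous⟩ : C(ℝ, ℂ)) =O[cocompact ℝ] fun x => |x| ^ (-2:ℝ) := by
    simpa [Real.norm_eq_abs] using H.isBigO_cocompact_rpow (-2)
  exact (isBigO_norm_restrict_cocompact _ two_pos h1
    ⟨Set.Icc 0 1, isCompact_Icc⟩).comp_tendsto Int.tendsto_coe_cofinite

open Set Filter Asymptotics in
/-- Summability of samples of a Schwartz function on the lattice `ℤ/a`. -/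
lemma aux_summable_g (g : SchwartzMap ℝ ℂ) {a : ℝ} (ha : a ≠ 0) :
    Summable fun n : ℤ => ‖g ((n:ℝ) / a)‖ := by
  refine summable_of_isBigO (Real.summable_abs_int_rpow one_lt_two) ?_
  have h1 : ⇑g =O[cocompact ℝ] fun x => ‖x‖ ^ (-2:ℝ) := g.isBigO_cocompact_rpow (-2)
  have h2 : Tendsto (fun n : ℤ => (n:ℝ)/a) cofinite (cocompact ℝ) := by
    simpa [div_eq_mul_inv, Function.comp_def] using
      (Filter.tendsto_cocompact_mul_right₀ (inv_ne_zero ha)).comp Int.tendsto_coe_cofinite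
  have h3 := h1.norm_left.comp_tendsto h2
  refine h3.trans ?_
  have key : ∀ n : ℤ, ‖(n:ℝ)/a‖ ^ (-2:ℝ) = |a| ^ (2:ℝ) * |(n:ℝ)| ^ (-2:ℝ) := by
    intro n
    rw [Real.norm_eq_abs, abs_div, Real.div_rpow (abs_nonneg _) (abs_nonneg _),
      div_eq_mul_inv, ← Real.rpow_neg (abs_nonneg a), neg_neg]
    ring
  simp only [Function.comp_def, key]
  exact Asymptotics.isBigO_const_mul_self _ _ _

/-- The distributional Fourier transform of a locally integrable `a`-periodic function `f`
is the weighted Dirac comb `(1/a) ∑_{n∈ℤ} F(n) δ_{n/a}`: tested against a Schwartz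
function `g`, one has `∫ f · 𝓕 g = (1/a) ∑_n F(n) g(n/a)`, the series converging absolutely. -/
theorem fourier_transform_of_periodic_function (a : ℝ) (ha : 0 < a) (f : ℝ → ℂ)
    (hf : LocallyIntegrable f volume)
    (hper : ∀ᵐ t : ℝ, f (t + a) = f t)
    (g : SchwartzMap ℝ ℂ) :
    Summable (fun n : ℤ => ‖fourierCoeffPeriodic a f n * g ((n : ℝ) / a)‖) ∧
    ∫ t : ℝ, f t * 𝓕 (⇑g) t =
      (1 / (a : ℂ)) * ∑' n : ℤ, fourierCoeffPeriodic a f n * g ((n : ℝ) / a) := by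
  classical
  have ha' : a ≠ 0 := ha.ne'
  have haC : (a : ℂ) ≠ 0 := by exact_mod_cast ha'
  -- norm of the exponential factors
  have hexpnorm : ∀ (m : ℤ) (t : ℝ),
      ‖Complex.exp (-2 * (Real.pi : ℂ) * Complex.I * (m : ℂ) * (t : ℂ) / (a : ℂ))‖ = 1 := by
    intro m t
    have e : -2 * (Real.pi : ℂ) * Complex.I * (m : ℂ) * (t : ℂ) / (a : ℂ)
        = ((-2 * Real.pi * m * t / a : ℝ) : ℂ) * Complex.I := by push_cast; ring
    rw [e, Complex.norm_exp_ofReal_mul_I]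
  have hfournorm : ∀ (n : ℤ) (x : ℝ), ‖fourier n (x : UnitAddCircle)‖ = 1 := by
    intro n x
    rw [fourier_coe_apply]
    have e : 2 * (Real.pi : ℂ) * Complex.I * (n:ℂ) * (x:ℂ) / ((1:ℝ):ℂ)
        = ((2 * Real.pi * n * x : ℝ) : ℂ) * Complex.I := by push_cast; ring
    rw [e, Complex.norm_exp_ofReal_mul_I]
  -- the summability statement (first conjunct)
  have hgsum : Summable fun n : ℤ => ‖g ((n:ℝ) / a)‖ := aux_summable_g g ha'
  set Na : ℝ := ∫ t in (0:ℝ)..a, ‖f t‖ with hNa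
  have hfI : ∀ b c : ℝ, IntervalIntegrable f volume b c := fun b c =>
    (hf.integrableOn_isCompact isCompact_uIcc).intervalIntegrable
  have hcb : ∀ n : ℤ, ‖fourierCoeffPeriodic a f n‖ ≤ Na := by
    intro n
    have h1 : ‖fourierCoeffPeriodic a f n‖
        ≤ ∫ t in (0:ℝ)..a, ‖f t * Complex.exp (-2 * (Real.pi : ℂ) * Complex.I
            * (n : ℂ) * (t : ℂ) / (a : ℂ))‖ :=
      intervalIntegral.norm_integral_le_integral_norm ha.le
    calc ‖fourierCoeffPeriodic a f n‖ ≤ _ := h1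
      _ = Na := by
        rw [hNa]
        congr 1
        funext t
        rw [norm_mul, hexpnorm, mul_one]
  have hsummable : Summable (fun n : ℤ => ‖fourierCoeffPeriodic a f n * g ((n : ℝ) / a)‖) := by
    refine Summable.of_nonneg_of_le (fun n => norm_nonneg _) (fun n => ?_) (hgsum.mul_left Na)
    rw [norm_mul]
    exact mul_le_mul_of_nonneg_right (hcb n) (norm_nonneg _)
  refine ⟨hsummable, ?_⟩
  -- Schwartz-side setup
  set G : SchwartzMap ℝ ℂ := FourierTransform.fourierCLE ℂ (SchwartzMap ℝ ℂ) g with hGdef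
  have hGg : ⇑G = 𝓕 ⇑g := rfl
  set e : ℝ ≃L[ℝ] ℝ := ContinuousLinearEquiv.unitsEquivAut ℝ (Units.mk0 a ha') with hedef
  set H : SchwartzMap ℝ ℂ := SchwartzMap.compCLMOfContinuousLinearEquiv ℝ e G with hHdef
  have hH : ∀ x : ℝ, H x = G (x * a) := by
    intro x
    have h1 : ⇑H = ⇑G ∘ ⇑e := by
      rw [hHdef]; exact SchwartzMap.compCLMOfContinuousLinearEquiv_apply ℝ e G
    rw [h1]
    show G (e x) = G (x * a)
    congr 1
  have hGinv : 𝓕⁻ ⇑G = ⇑g := by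
    have h1 := FourierTransform.fourierCLE_symm_apply (R := ℂ) (E := SchwartzMap ℝ ℂ) G
    rw [hGdef, ContinuousLinearEquiv.symm_apply_apply] at h1
    rw [← hGdef] at h1
    rw [← SchwartzMap.fourierInv_coe, ← h1]
  have hFG : ∀ w : ℝ, 𝓕 ⇑G w = g (-w) := by
    intro w
    have h2 := Real.fourierInv_eq_fourier_neg (⇑G) (-w)
    rw [neg_neg] at h2
    rw [← h2, hGinv]
  have hFH : ∀ ξ : ℝ, 𝓕 ⇑H ξ = (a:ℂ)⁻¹ * g (-(ξ/a)) := by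
    intro ξ
    have e3 : ∀ v : ℝ, (-2 * Real.pi * v * ξ : ℝ) = (-2 * Real.pi * (v * a) * (ξ/a) : ℝ) := by
      intro v; field_simp
    rw [Real.fourier_real_eq_integral_exp_smul]
    calc ∫ v : ℝ, Complex.exp (((-2 * Real.pi * v * ξ : ℝ) : ℂ) * Complex.I) • H v
        = ∫ v : ℝ, (fun u : ℝ =>
            Complex.exp (((-2 * Real.pi * u * (ξ/a) : ℝ) : ℂ) * Complex.I) • G u) (v * a) := by
          congr 1
          funext v
          show Complex.exp (((-2 * Real.pi * v * ξ : ℝ) : ℂ) * Complex.I) • H v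
              = Complex.exp (((-2 * Real.pi * (v * a) * (ξ/a) : ℝ) : ℂ) * Complex.I) • G (v * a)
          rw [hH v, e3 v]
      _ = |a⁻¹| • ∫ u : ℝ,
            Complex.exp (((-2 * Real.pi * u * (ξ/a) : ℝ) : ℂ) * Complex.I) • G u :=
          Measure.integral_comp_mul_right
            (fun u : ℝ => Complex.exp (((-2 * Real.pi * u * (ξ/a) : ℝ) : ℂ) * Complex.I) • G u) a
      _ = (a:ℂ)⁻¹ * g (-(ξ/a)) := by
          rw [← Real.fourier_real_eq_integral_exp_smul, hFG, abs_of_pos (inv_pos.mpr ha)]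
          rw [Complex.real_smul, Complex.ofReal_inv]
  -- scaled coordinates
  set φ : ℝ → ℂ := fun x => f (x * a) with hφdef
  set ψ : ℝ → ℂ := fun x => φ x * H x with hψdef
  have hshift : ∀ (c : ℝ) {u v : ℝ → ℂ}, u =ᵐ[volume] v →
      (fun x : ℝ => u (x + c)) =ᵐ[volume] (fun x : ℝ => v (x + c)) := by
    intro c u v h
    exact (measurePreserving_add_right volume c).quasiMeasurePreserving.ae_eq_comp h
  have hqmul : Measure.QuasiMeasurePreserving (fun x : ℝ => x * a) volume volume := by
    refine ⟨measurable_id.mul_const a, ?_⟩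
    rw [Real.map_volume_mul_right ha']
    exact Measure.smul_absolutelyContinuous
  have hper1 : (fun x : ℝ => φ (x + 1)) =ᵐ[volume] φ := by
    have hper' : (fun t : ℝ => f (t + a)) =ᵐ[volume] f := hper
    have h2 := hqmul.ae_eq_comp hper'
    have e1 : (fun x : ℝ => φ (x + 1)) = (fun t : ℝ => f (t + a)) ∘ (fun x : ℝ => x * a) :=
      funext fun x => congrArg f (by ring)
    have e2 : φ = f ∘ (fun x : ℝ => x * a) := rfl
    rw [e1, e2]
    exact h2
  have hφk : ∀ k : ℤ, (fun x : ℝ => φ (x + (k:ℝ))) =ᵐ[volume] φ := by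
    intro k
    induction k using Int.induction_on with
    | zero => simp
    | succ i hi =>
        have h1 := hshift 1 hi
        have e : (fun x : ℝ => φ (x + (((i:ℤ)+1 : ℤ) : ℝ))) =
            fun x : ℝ => φ ((x + 1) + ((i:ℤ):ℝ)) :=
          funext fun x => congrArg φ (by push_cast; ring)
        rw [e]
        exact h1.trans hper1
    | pred i hi =>
        have h1 := hshift (-1) hi
        have h2 := hshift (-1) hper1
        have e : (fun x : ℝ => φ (x + (((-(i:ℤ)) - 1 : ℤ) : ℝ))) =
            fun x : ℝ => φ ((x + -1) + (((-(i:ℤ)) : ℤ) : ℝ)) :=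
          funext fun x => congrArg φ (by push_cast; ring)
        have e2 : (fun x : ℝ => φ ((x + -1) + 1)) = φ := funext fun x => congrArg φ (by ring)
        rw [e]
        refine h1.trans ?_
        exact (e2 ▸ h2).symm
  have hφI : ∀ b c : ℝ, IntervalIntegrable φ volume b c := by
    intro b c
    have h := (hfI (b * a) (c * a)).comp_mul_right (c := a)
    simpa [mul_div_cancel_right₀, ha'] using h
  have hφIcc : IntegrableOn φ (Set.Icc (0:ℝ) 1) volume :=
    (intervalIntegrable_iff_integrableOn_Icc_of_le zero_le_one).mp (hφI 0 1)
  have hφIoc01 : IntegrableOn φ (Set.Ioc (0:ℝ) 1) volume := hφIcc.mono_set Set.Ioc_subset_Icc_self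
  set Hc : C(ℝ, ℂ) := ⟨⇑H, H.continuous⟩ with hHcdef
  set B : ℤ → ℝ :=
    fun k => ‖((Hc.comp (ContinuousMap.addRight (k:ℝ))).restrict (Set.Icc (0:ℝ) 1))‖ with hBdef
  have hBsum : Summable B := aux_summable_B H
  have hBbound : ∀ (k : ℤ) (x : ℝ), x ∈ Set.Icc (0:ℝ) 1 → ‖H (x + (k:ℝ))‖ ≤ B k := by
    intro k x hx
    exact ((Hc.comp (ContinuousMap.addRight (k:ℝ))).restrict (Set.Icc (0:ℝ) 1)).norm_coe_le_norm
      ⟨x, hx⟩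
  set N : ℝ := ∫ x in Set.Ioc (0:ℝ) 1, ‖φ x‖ with hNdef
  have hNk : ∀ k : ℤ, ∫ x in Set.Ioc ((k:ℝ)) ((k:ℝ)+1), ‖φ x‖ = N := by
    intro k
    rw [← intervalIntegral.integral_of_le (by linarith : (k:ℝ) ≤ (k:ℝ)+1)]
    have h1 : ∫ x in (0:ℝ)..1, ‖φ (x + (k:ℝ))‖ = ∫ x in (k:ℝ)..((k:ℝ)+1), ‖φ x‖ := by
      rw [intervalIntegral.integral_comp_add_right (fun x => ‖φ x‖) (k:ℝ)]
      norm_num [add_comm]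
    rw [← h1]
    have h2 : ∫ x in (0:ℝ)..1, ‖φ (x + (k:ℝ))‖ = ∫ x in (0:ℝ)..1, ‖φ x‖ := by
      refine intervalIntegral.integral_congr_ae ?_
      filter_upwards [hφk k] with x hx _
      rw [show φ (x + (k:ℝ)) = φ x from hx]
    rw [h2, intervalIntegral.integral_of_le zero_le_one]
  have hψIoc : ∀ k : ℤ, IntegrableOn ψ (Set.Ioc ((k:ℝ)) ((k:ℝ)+1)) volume := by
    intro k
    have hφIcck : IntegrableOn φ (Set.Icc ((k:ℝ)) ((k:ℝ)+1)) volume :=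
      (intervalIntegrable_iff_integrableOn_Icc_of_le (by linarith)).mp (hφI _ _)
    exact (hφIcck.mul_continuousOn H.continuous.continuousOn isCompact_Icc).mono_set
      Set.Ioc_subset_Icc_self
  have hφIock : ∀ k : ℤ, IntegrableOn φ (Set.Ioc ((k:ℝ)) ((k:ℝ)+1)) volume := fun k =>
    (intervalIntegrable_iff_integrableOn_Ioc_of_le (by linarith)).mp (hφI _ _)
  have hψbound : ∀ k : ℤ, ∫ x in Set.Ioc ((k:ℝ)) ((k:ℝ)+1), ‖ψ x‖ ≤ N * B k := by
    intro k
    have hmono : ∫ x in Set.Ioc ((k:ℝ)) ((k:ℝ)+1), ‖ψ x‖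
        ≤ ∫ x in Set.Ioc ((k:ℝ)) ((k:ℝ)+1), ‖φ x‖ * B k := by
      refine setIntegral_mono_on (hψIoc k).norm ((hφIock k).norm.mul_const _)
        measurableSet_Ioc ?_
      intro x hx
      have hx' : x - (k:ℝ) ∈ Set.Icc (0:ℝ) 1 := ⟨by linarith [hx.1], by linarith [hx.2]⟩
      have hb := hBbound k (x - (k:ℝ)) hx'
      rw [sub_add_cancel] at hb
      calc ‖ψ x‖ = ‖φ x‖ * ‖H x‖ := norm_mul _ _
        _ ≤ ‖φ x‖ * B k := mul_le_mul_of_nonneg_left hb (norm_nonneg _)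
    refine hmono.trans (le_of_eq ?_)
    rw [integral_mul_const, hNk k]
  have hψInt : Integrable ψ volume := by
    have h := integrableOn_iUnion_of_summable_integral_norm
      (s := fun k : ℤ => Set.Ioc ((k:ℝ)) ((k:ℝ)+1)) hψIoc
      (Summable.of_nonneg_of_le (fun k => integral_nonneg fun x => norm_nonneg _)
        hψbound (hBsum.mul_left N))
    rwa [iUnion_Ioc_intCast, integrableOn_univ] at h
  have hInt1 : ∀ k : ℤ, Integrable (fun x => φ x * H (x + (k:ℝ)))
      (volume.restrict (Set.Ioc (0:ℝ) 1)) := by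
    intro k
    exact ((hφIcc.mul_continuousOn
      (H.continuous.comp (continuous_add_right ((k:ℝ)))).continuousOn
      isCompact_Icc).mono_set Set.Ioc_subset_Icc_self)
  have hSum1 : Summable fun k : ℤ => ∫ x in Set.Ioc (0:ℝ) 1, ‖φ x * H (x + (k:ℝ))‖ := by
    refine Summable.of_nonneg_of_le (fun k => integral_nonneg fun x => norm_nonneg _)
      (fun k => ?_) (hBsum.mul_left N)
    have hmono : ∫ x in Set.Ioc (0:ℝ) 1, ‖φ x * H (x + (k:ℝ))‖
        ≤ ∫ x in Set.Ioc (0:ℝ) 1, ‖φ x‖ * B k := by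
      refine setIntegral_mono_on (hInt1 k).norm (hφIoc01.norm.mul_const _)
        measurableSet_Ioc ?_
      intro x hx
      rw [norm_mul]
      exact mul_le_mul_of_nonneg_left (hBbound k x (Set.Ioc_subset_Icc_self hx)) (norm_nonneg _)
    refine hmono.trans (le_of_eq ?_)
    rw [integral_mul_const, ← hNdef]
  have hPoisson : ∀ x : ℝ, ∑' k : ℤ, H (x + (k:ℝ))
      = ∑' n : ℤ, 𝓕 ⇑H ((n:ℝ)) * fourier n (x : UnitAddCircle) := by
    intro x
    have h := H.tsum_eq_tsum_fourier x
    exact h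
  have hFHsum : Summable fun n : ℤ => ‖𝓕 ⇑H ((n:ℝ))‖ := by
    have hneg : Summable fun n : ℤ => ‖g (-((n:ℝ)/a))‖ := by
      have h0 : Summable ((fun n : ℤ => ‖g ((n:ℝ)/a)‖) ∘ (Equiv.neg ℤ)) :=
        ((Equiv.neg ℤ).summable_iff).mpr hgsum
      refine h0.congr fun n => ?_
      show ‖g ((((- n : ℤ)):ℝ)/a)‖ = ‖g (-((n:ℝ)/a))‖
      norm_num [neg_div]
    refine (hneg.mul_left ‖(a:ℂ)⁻¹‖).congr fun n => ?_
    rw [hFH, norm_mul]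
  have hInt2 : ∀ n : ℤ, Integrable
      (fun x => φ x * (𝓕 ⇑H ((n:ℝ)) * fourier n (x : UnitAddCircle)))
      (volume.restrict (Set.Ioc (0:ℝ) 1)) := by
    intro n
    have hcont : Continuous fun x : ℝ => 𝓕 ⇑H ((n:ℝ)) * fourier n (x : UnitAddCircle) :=
      continuous_const.mul ((map_continuous (fourier n)).comp continuous_quotient_mk')
    exact ((hφIcc.mul_continuousOn hcont.continuousOn isCompact_Icc).mono_set
      Set.Ioc_subset_Icc_self)
  have hSum2 : Summable fun n : ℤ =>
      ∫ x in Set.Ioc (0:ℝ) 1, ‖φ x * (𝓕 ⇑H ((n:ℝ)) * fourier n (x : UnitAddCircle))‖ := by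
    refine Summable.of_nonneg_of_le (fun n => integral_nonneg fun x => norm_nonneg _)
      (fun n => ?_) (hFHsum.mul_left N)
    have hmono : ∫ x in Set.Ioc (0:ℝ) 1, ‖φ x * (𝓕 ⇑H ((n:ℝ)) * fourier n (x : UnitAddCircle))‖
        ≤ ∫ x in Set.Ioc (0:ℝ) 1, ‖φ x‖ * ‖𝓕 ⇑H ((n:ℝ))‖ := by
      refine setIntegral_mono_on (hInt2 n).norm (hφIoc01.norm.mul_const _)
        measurableSet_Ioc ?_
      intro x hx
      refine le_of_eq ?_
      rw [norm_mul, norm_mul, hfournorm, mul_one]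
    refine hmono.trans (le_of_eq ?_)
    rw [integral_mul_const, ← hNdef, mul_comm]
  have h7 : ∀ n : ℤ, ∫ x in Set.Ioc (0:ℝ) 1, φ x * fourier n (x : UnitAddCircle)
      = (a:ℂ)⁻¹ * fourierCoeffPeriodic a f (-n) := by
    intro n
    rw [← intervalIntegral.integral_of_le zero_le_one]
    have e : ∀ x : ℝ, φ x * fourier n (x : UnitAddCircle)
        = (fun t : ℝ => f t * Complex.exp (-2 * (Real.pi:ℂ) * Complex.I
            * (((-n : ℤ)) : ℂ) * (t:ℂ) / (a:ℂ))) (x * a) := by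
      intro x
      show f (x * a) * fourier n (x : UnitAddCircle)
          = f (x * a) * Complex.exp (-2 * (Real.pi:ℂ) * Complex.I
              * (((-n : ℤ)) : ℂ) * ((x * a : ℝ):ℂ) / (a:ℂ))
      congr 1
      rw [fourier_coe_apply]
      congr 1
      push_cast
      field_simp
    calc ∫ x in (0:ℝ)..1, φ x * fourier n (x : UnitAddCircle)
        = ∫ x in (0:ℝ)..1, (fun t : ℝ => f t * Complex.exp (-2 * (Real.pi:ℂ) * Complex.I
            * (((-n : ℤ)) : ℂ) * (t:ℂ) / (a:ℂ))) (x * a) :=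
          intervalIntegral.integral_congr (fun x _ => e x)
      _ = a⁻¹ • ∫ t in (0:ℝ)*a..(1:ℝ)*a, f t * Complex.exp (-2 * (Real.pi:ℂ) * Complex.I
            * (((-n : ℤ)) : ℂ) * (t:ℂ) / (a:ℂ)) :=
          intervalIntegral.integral_comp_mul_right (fun t : ℝ => f t
            * Complex.exp (-2 * (Real.pi:ℂ) * Complex.I * (((-n : ℤ)) : ℂ) * (t:ℂ) / (a:ℂ))) ha'
      _ = (a:ℂ)⁻¹ * fourierCoeffPeriodic a f (-n) := by
          rw [zero_mul, one_mul, fourierCoeffPeriodic, Complex.real_smul, Complex.ofReal_inv]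
  have key : ∫ x, ψ x
      = ∑' n : ℤ, 𝓕 ⇑H ((n:ℝ)) * ((a:ℂ)⁻¹ * fourierCoeffPeriodic a f (-n)) := by
    calc ∫ x, ψ x = ∑' k : ℤ, ∫ x in (0:ℝ)..1, ψ (x + (k:ℝ)) :=
          hψInt.hasSum_intervalIntegral_comp_add_int.tsum_eq.symm
      _ = ∑' k : ℤ, ∫ x in (0:ℝ)..1, φ x * H (x + (k:ℝ)) := by
          refine tsum_congr fun k => intervalIntegral.integral_congr_ae ?_
          filter_upwards [hφk k] with x hx _
          show φ (x + (k:ℝ)) * H (x + (k:ℝ)) = φ x * H (x + (k:ℝ))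
          rw [show φ (x + (k:ℝ)) = φ x from hx]
      _ = ∑' k : ℤ, ∫ x in Set.Ioc (0:ℝ) 1, φ x * H (x + (k:ℝ)) := by
          simp_rw [intervalIntegral.integral_of_le zero_le_one]
      _ = ∫ x in Set.Ioc (0:ℝ) 1, ∑' k : ℤ, φ x * H (x + (k:ℝ)) :=
          integral_tsum_of_summable_integral_norm hInt1 hSum1
      _ = ∫ x in Set.Ioc (0:ℝ) 1,
            ∑' n : ℤ, φ x * (𝓕 ⇑H ((n:ℝ)) * fourier n (x : UnitAddCircle)) := by
          refine integral_congr_ae (Filter.Eventually.of_forall fun x => ?_)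
          show ∑' k : ℤ, φ x * H (x + (k:ℝ))
              = ∑' n : ℤ, φ x * (𝓕 ⇑H ((n:ℝ)) * fourier n (x : UnitAddCircle))
          rw [tsum_mul_left, hPoisson x, ← tsum_mul_left]
      _ = ∑' n : ℤ, ∫ x in Set.Ioc (0:ℝ) 1,
            φ x * (𝓕 ⇑H ((n:ℝ)) * fourier n (x : UnitAddCircle)) :=
          (integral_tsum_of_summable_integral_norm hInt2 hSum2).symm
      _ = ∑' n : ℤ, 𝓕 ⇑H ((n:ℝ)) * ((a:ℂ)⁻¹ * fourierCoeffPeriodic a f (-n)) := by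
          refine tsum_congr fun n => ?_
          rw [← h7 n, ← MeasureTheory.integral_const_mul]
          exact integral_congr_ae (Filter.Eventually.of_forall fun x => by ring)
  have hscale : ∫ t : ℝ, f t * 𝓕 (⇑g) t = (a:ℂ) * ∫ x, ψ x := by
    have h := Measure.integral_comp_mul_right (fun t => f t * G t) a
    have e1 : (fun x : ℝ => f (x * a) * G (x * a)) = ψ := funext fun x => by
      show f (x * a) * G (x * a) = φ x * H x
      rw [hH x]
    rw [e1] at h
    rw [abs_of_pos (inv_pos.mpr ha)] at h
    have e2 : ∫ t : ℝ, f t * 𝓕 (⇑g) t = ∫ t : ℝ, f t * G t := by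
      refine integral_congr_ae (Filter.Eventually.of_forall fun t => ?_)
      rw [hGg]
    rw [e2, h, Complex.real_smul, Complex.ofReal_inv, ← mul_assoc,
      mul_inv_cancel₀ haC, one_mul]
  rw [hscale, key]
  have hterm : ∀ n : ℤ, 𝓕 ⇑H ((n:ℝ)) * ((a:ℂ)⁻¹ * fourierCoeffPeriodic a f (-n))
      = (fun m : ℤ => (a:ℂ)⁻¹ * (a:ℂ)⁻¹ * (fourierCoeffPeriodic a f m * g ((m:ℝ)/a)))
          ((Equiv.neg ℤ) n) := by
    intro n
    show _ = (a:ℂ)⁻¹ * (a:ℂ)⁻¹ * (fourierCoeffPeriodic a f (-n) * g ((((-n : ℤ)):ℝ)/a))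
    rw [hFH]
    rw [show ((((-n : ℤ)):ℝ))/a = -((n:ℝ)/a) by push_cast; ring]
    ring
  calc (a:ℂ) * ∑' n : ℤ, 𝓕 ⇑H ((n:ℝ)) * ((a:ℂ)⁻¹ * fourierCoeffPeriodic a f (-n))
      = (a:ℂ) * ∑' n : ℤ, (fun m : ℤ => (a:ℂ)⁻¹ * (a:ℂ)⁻¹
          * (fourierCoeffPeriodic a f m * g ((m:ℝ)/a))) ((Equiv.neg ℤ) n) := by
        exact congrArg (fun z : ℂ => (a:ℂ) * z) (tsum_congr hterm)
    _ = (a:ℂ) * ∑' m : ℤ, (a:ℂ)⁻¹ * (a:ℂ)⁻¹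
          * (fourierCoeffPeriodic a f m * g ((m:ℝ)/a)) := by
        exact congrArg (fun z : ℂ => (a:ℂ) * z) ((Equiv.neg ℤ).tsum_eq
          (fun m : ℤ => (a:ℂ)⁻¹ * (a:ℂ)⁻¹ * (fourierCoeffPeriodic a f m * g ((m:ℝ)/a))))
    _ = (1/(a:ℂ)) * ∑' m : ℤ, fourierCoeffPeriodic a f m * g ((m:ℝ)/a) := by
        rw [tsum_mul_left, ← mul_assoc]
        congr 1
        field_simp
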